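/- arXiv:cond-mat/0510607 — 3 statements merged into one kernel-verified Lean document; each statement's English description precedes it below -/
import Mathlib

section
/- Let K ≥ 2 be even, N > K, and let G be the K-nearest-neighbor ring on vertices {0, 1, …, N−1}, in which vertex i is adjacent to vertex j if and only if (i − j) mod N lies in {1, …, K/2} ∪ {N − K/2, …, N − 1}. Then the eigenvalues of the coupling matrix A = −L(G) are exactly λ_j = −4 ∑_{k=1}^{K/2} sin²(jkπ/N) for j = 0, 1, …, N−1. -/
/-!
The coupling matrix of the ring is the circulant matrix of its first column `c`, and every
circulant matrix is diagonalised by the discrete Fourier basis: the character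
`a ↦ ζ ^ (j a)` of `Fin N`, for `ζ` a primitive `N`-th root of unity, is an eigenvector with
eigenvalue `∑ d, c d ζ ^ (-j d)`, and these `N` characters form an invertible (Vandermonde)
matrix. For the ring, `c` is `1` at the offsets `±1, …, ±K/2` and minus their number at `0`,
so the eigenvalue is `∑ₖ (ζ ^ (jk) + ζ ^ (-jk) - 2) = ∑ₖ (2 cos (2πjk/N) - 2) = -4 ∑ₖ sin² (πjk/N)`.
-/

/-- Adjacency relation of the `K`-nearest-neighbor ring on `{0, 1, …, N-1}`:
vertex `i` is adjacent to vertex `j` iff `(i - j) mod N` lies in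
`{1, …, K/2} ∪ {N - K/2, …, N - 1}`. -/
def ringAdj (N K : ℕ) (i j : Fin N) : Prop :=
  (1 ≤ (i.val + N - j.val) % N ∧ (i.val + N - j.val) % N ≤ K / 2) ∨
  (N - K / 2 ≤ (i.val + N - j.val) % N ∧ (i.val + N - j.val) % N ≤ N - 1)

instance (N K : ℕ) (i j : Fin N) : Decidable (ringAdj N K i j) := by
  unfold ringAdj; infer_instance

/-- The coupling matrix `A = -L(G)` of the `K`-nearest-neighbor ring:
`a i j = 1` if `i` and `j` are adjacent (`i ≠ j`), `a i j = 0` for nonadjacent `i ≠ j`,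
and `a i i = -(degree of i)`. -/
noncomputable def ringCoupling (N K : ℕ) : Matrix (Fin N) (Fin N) ℝ :=
  fun i j =>
    if i = j then -((Finset.univ.filter (fun l : Fin N => ringAdj N K i l)).card : ℝ)
    else if ringAdj N K i j then 1 else 0

open Finset Matrix Polynomial

section Circulant

variable {G R : Type*} [AddCommGroup G] [Fintype G] [CommRing R]

theorem Matrix.circulant_mulVec_addChar (v : G → R) (ψ : AddChar G R) :
    circulant v *ᵥ ⇑ψ = (∑ d, v d * ψ (-d)) • ⇑ψ := by
  ext i
  calc (circulant v *ᵥ ⇑ψ) i = ∑ d, v d * ψ (i - d) :=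
        (Equiv.sum_comp (Equiv.subLeft i) fun l => v (i - l) * ψ l).symm.trans (by simp)
    _ = ((∑ d, v d * ψ (-d)) • ⇑ψ) i := by
        simp only [sub_eq_add_neg, AddChar.map_add_eq_mul, sum_mul, Pi.smul_apply, smul_eq_mul]
        exact sum_congr rfl fun d _ => by ring

variable [DecidableEq G]

theorem Matrix.charpoly_circulant_of_isUnit_det (v : G → R) (ψ : G → AddChar G R)
    (hψ : IsUnit (Matrix.of fun g j => ψ j g).det) :
    (circulant v).charpoly = ∏ j, (X - C (∑ d, v d * ψ j (-d))) := by
  set F : Matrix G G R := Matrix.of fun g j => ψ j g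
  have hdiag : circulant v * F = F * diagonal fun j => ∑ d, v d * ψ j (-d) := by
    ext g j
    rw [mul_diagonal, mul_comm (F g j)]
    simpa [mulVec, dotProduct, mul_apply, F] using congrFun (circulant_mulVec_addChar v (ψ j)) g
  have hconj : circulant v = F * diagonal (fun j => ∑ d, v d * ψ j (-d)) * F⁻¹ := by
    rw [← hdiag, mul_nonsing_inv_cancel_right _ _ hψ]
  rw [hconj, ← charpoly_diagonal]
  exact charpoly_units_conj ((isUnit_iff_isUnit_det F).mpr hψ).unit _

end Circulant

section DFT

variable {R : Type*} {N : ℕ} [NeZero N]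

def Fin.dftAddChar [CommMonoid R] {ζ : R} (hζ : ζ ^ N = 1) (j : Fin N) : AddChar (Fin N) R where
  toFun a := ζ ^ (j.val * a.val)
  map_zero_eq_one' := by simp
  map_add_eq_mul' a b := by
    have hζj : (ζ ^ j.val) ^ N = 1 := by rw [← pow_mul, mul_comm, pow_mul, hζ, one_pow]
    simp only [pow_mul, Fin.val_add, ← pow_eq_pow_mod _ hζj, pow_add]

theorem Fin.dftAddChar_apply [CommMonoid R] {ζ : R} (hζ : ζ ^ N = 1) (j a : Fin N) :
    Fin.dftAddChar hζ j a = ζ ^ (j.val * a.val) := rfl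

theorem IsPrimitiveRoot.det_dftAddChar_ne_zero [CommRing R] [IsDomain R] {ζ : R}
    (hζ : IsPrimitiveRoot ζ N) :
    (Matrix.of fun a j => Fin.dftAddChar hζ.pow_eq_one j a).det ≠ 0 := by
  have hvdm : (Matrix.of fun a j => Fin.dftAddChar hζ.pow_eq_one j a) =
      (vandermonde fun j : Fin N => ζ ^ j.val)ᵀ := by
    ext a j
    simp [Fin.dftAddChar_apply, vandermonde_apply, pow_mul]
  rw [hvdm, det_transpose, det_vandermonde_ne_zero_iff]
  intro i j hij
  exact Fin.ext (hζ.pow_inj i.isLt j.isLt hij)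

theorem IsPrimitiveRoot.charpoly_circulant [Field R] {ζ : R} (hζ : IsPrimitiveRoot ζ N)
    (v : Fin N → R) :
    (circulant v).charpoly = ∏ j, (X - C (∑ d, v d * Fin.dftAddChar hζ.pow_eq_one j (-d))) :=
  charpoly_circulant_of_isUnit_det v _ (isUnit_iff_ne_zero.mpr hζ.det_dftAddChar_ne_zero)

end DFT

section CouplingSymbol

variable {G R : Type*} [Zero G] [DecidableEq G] [Ring R]

-- The first column of `-L` for the Cayley graph of `G` with symmetric connection set `S`.
def couplingSymbol (S : Finset G) (d : G) : R :=
  if d = 0 then -(#S : R) else if d ∈ S then 1 else 0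

theorem map_couplingSymbol {R' : Type*} [Ring R'] (f : R →+* R') (S : Finset G) (d : G) :
    f (couplingSymbol S d) = couplingSymbol S d := by
  unfold couplingSymbol
  split_ifs <;> simp

theorem sum_couplingSymbol_mul [Fintype G] {S : Finset G} (hS : 0 ∉ S) (f : G → R) :
    ∑ d, couplingSymbol S d * f d = ∑ d ∈ S, (f d - f 0) := by
  have hsplit : ∀ d, couplingSymbol S d * f d =
      (if d ∈ S then f d else 0) - if d = 0 then #S * f 0 else 0 := by
    intro d
    unfold couplingSymbol
    split_ifs <;> simp_all
  simp only [hsplit, sum_sub_distrib, sum_ite_mem, univ_inter, sum_ite_eq', mem_univ, if_true,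
    sum_const, nsmul_eq_mul]

end CouplingSymbol

section Ring

open Fin.NatCast

variable {N K : ℕ}

def ringOffsets (N K : ℕ) : Finset (Fin N) :=
  univ.filter fun d => (1 ≤ d.val ∧ d.val ≤ K / 2) ∨ (N - K / 2 ≤ d.val ∧ d.val ≤ N - 1)

theorem ringAdj_iff_sub_mem_ringOffsets (i j : Fin N) :
    ringAdj N K i j ↔ i - j ∈ ringOffsets N K := by
  have hsub : (i - j).val = (i.val + N - j.val) % N := by
    rw [Fin.val_sub]
    congr 1
    omega
  simp [ringAdj, ringOffsets, hsub]

theorem card_filter_ringAdj [NeZero N] (i : Fin N) :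
    #(univ.filter fun l => ringAdj N K i l) = #(ringOffsets N K) :=
  card_equiv (Equiv.subLeft i) fun l => by simp [ringAdj_iff_sub_mem_ringOffsets]

theorem ringCoupling_eq_circulant [NeZero N] :
    ringCoupling N K = circulant (couplingSymbol (ringOffsets N K)) := by
  ext i j
  by_cases hij : i = j
  · simp [ringCoupling, couplingSymbol, hij, card_filter_ringAdj]
  · simp [ringCoupling, couplingSymbol, hij, sub_eq_zero, ringAdj_iff_sub_mem_ringOffsets]

theorem sum_ringOffsets [NeZero N] (hK : K / 2 + K / 2 < N) {M : Type*} [AddCommMonoid M]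
    (f : Fin N → M) :
    ∑ d ∈ ringOffsets N K, f d = ∑ k ∈ Icc 1 (K / 2), (f k + f (-k)) := by
  set lower := univ.filter fun d : Fin N => 1 ≤ d.val ∧ d.val ≤ K / 2
  have hlower (g : Fin N → M) : ∑ d ∈ lower, g d = ∑ k ∈ Icc 1 (K / 2), g k := by
    refine sum_nbij' Fin.val Nat.cast (fun d hd => by simpa [lower] using hd) (fun k hk => ?_)
      (fun d _ => Fin.cast_val_eq_self d) (fun k hk => ?_) (fun d _ => by rw [Fin.cast_val_eq_self])
    · rw [mem_Icc] at hk
      simp [lower, Fin.val_cast_of_lt (by omega : k < N), hk]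
    · rw [mem_Icc] at hk
      exact Fin.val_cast_of_lt (by omega)
  have hupper : ringOffsets N K = lower ∪ lower.map (Equiv.neg (Fin N)).toEmbedding := by
    ext d
    by_cases hd : d = 0
    · simp [ringOffsets, lower, hd]
      omega
    · simp [ringOffsets, lower, Fin.val_neg, hd]
      omega
  have hdisj : Disjoint lower (lower.map (Equiv.neg (Fin N)).toEmbedding) := by
    rw [disjoint_left]
    intro d hd
    have hd0 : d ≠ 0 := by rintro rfl; simp [lower] at hd
    simp only [lower, mem_filter, mem_univ, true_and] at hd
    simp [lower, Fin.val_neg, hd0]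
    omega
  rw [hupper, sum_union hdisj, sum_map, hlower, hlower, ← sum_add_distrib]
  rfl

end Ring

theorem Complex.exp_two_mul_I_add_exp_neg_sub_two (x : ℂ) :
    exp (2 * x * I) + exp (-(2 * x * I)) - 2 = -4 * sin x ^ 2 := by
  rw [← neg_mul, ← two_cos, cos_two_mul_eq_one_sub]
  ring

section RingSpectrum

open Fin.NatCast Complex

variable {N K : ℕ} [NeZero N]

theorem zero_notMem_ringOffsets (hK : K / 2 < N) : (0 : Fin N) ∉ ringOffsets N K := by
  simp [ringOffsets]
  omega

theorem Fin.dftAddChar_exp_natCast (j : Fin N) {k : ℕ} (hk : k < N) :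
    Fin.dftAddChar (isPrimitiveRoot_exp N (NeZero.ne N)).pow_eq_one j k =
      exp (2 * ((j : ℕ) * k * Real.pi / N : ℝ) * I) := by
  rw [Fin.dftAddChar_apply, Fin.val_cast_of_lt hk, ← exp_nat_mul]
  push_cast
  ring_nf

theorem sum_couplingSymbol_ringOffsets_mul_dftAddChar (hK : K < N) (j : Fin N) :
    ∑ d, couplingSymbol (ringOffsets N K) d *
        Fin.dftAddChar (isPrimitiveRoot_exp N (NeZero.ne N)).pow_eq_one j (-d) =
      ((-4 * ∑ k ∈ Icc 1 (K / 2), Real.sin ((j : ℕ) * k * Real.pi / N) ^ 2 : ℝ) : ℂ) := by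
  rw [sum_couplingSymbol_mul (zero_notMem_ringOffsets (by omega)), sum_ringOffsets (by omega)]
  push_cast [mul_sum]
  refine sum_congr rfl fun k hk => ?_
  have hkN : k < N := by rw [mem_Icc] at hk; omega
  simp only [neg_neg, neg_zero, AddChar.map_zero_eq_one, AddChar.map_neg_eq_inv,
    Fin.dftAddChar_exp_natCast j hkN, ← exp_neg]
  have h := exp_two_mul_I_add_exp_neg_sub_two ((j : ℕ) * k * Real.pi / N : ℝ)
  push_cast at h ⊢
  linear_combination h

end RingSpectrum

theorem ring_coupling_matrix_eigenvalues_general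
    {N K : ℕ} (hNK : K < N) :
    (ringCoupling N K).charpoly.roots =
      (Finset.univ.val : Multiset (Fin N)).map
        (fun j => -4 * ∑ k ∈ Finset.Icc 1 (K / 2),
          Real.sin ((j : ℕ) * k * Real.pi / N) ^ 2) := by
  have : NeZero N := ⟨by omega⟩
  set eigenvalue : ℕ → ℝ := fun j => -4 * ∑ k ∈ Icc 1 (K / 2),
    Real.sin (j * k * Real.pi / N) ^ 2
  have hcharpoly : (ringCoupling N K).charpoly = ∏ j : Fin N, (X - C (eigenvalue j)) := by
    apply map_injective (algebraMap ℝ ℂ) (algebraMap ℝ ℂ).injective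
    rw [← charpoly_map, ringCoupling_eq_circulant, map_circulant,
      (Complex.isPrimitiveRoot_exp N (NeZero.ne N)).charpoly_circulant, Polynomial.map_prod]
    refine prod_congr rfl fun j _ => ?_
    rw [Polynomial.map_sub, map_X, map_C]
    simp only [map_couplingSymbol, sum_couplingSymbol_ringOffsets_mul_dftAddChar hNK]
    rfl
  rw [hcharpoly, roots_prod _ _ (prod_ne_zero_iff.mpr fun j _ => X_sub_C_ne_zero _)]
  -- the right-hand side maps over `univ.val` coerced to a `Multiset ℕ` by the monad structure
  simp only [roots_X_sub_C, Multiset.bind_singleton, bind_pure_comp, Multiset.fmap_def,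
    Multiset.map_map]
  rfl

/-- Let `K ≥ 2` be even, `N > K`, and let `G` be the `K`-nearest-neighbor ring on
`{0, 1, …, N-1}`.  Then the eigenvalues of the coupling matrix `A = -L(G)` (with
multiplicity, i.e. the roots of its characteristic polynomial) are exactly
`λ_j = -4 * ∑_{k=1}^{K/2} sin² (j k π / N)` for `j = 0, 1, …, N-1`. -/
theorem ring_coupling_matrix_eigenvalues
    {N K : ℕ} (hK : 2 ≤ K) (hKeven : Even K) (hNK : K < N) :
    (ringCoupling N K).charpoly.roots =
      (Finset.univ.val : Multiset (Fin N)).map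
        (fun j => -4 * ∑ k ∈ Finset.Icc 1 (K / 2),
          Real.sin ((j : ℕ) * k * Real.pi / N) ^ 2) :=
  ring_coupling_matrix_eigenvalues_general hNK
end

section
/- Let J : ℝ → ℝ^{n×n} be continuous, let Γ ∈ ℝ^{n×n} be a diagonal matrix, and suppose there exist a diagonal positive definite matrix P ∈ ℝ^{n×n}, constants d̄ < 0 and τ > 0 such that for every d ≤ d̄ and every t, (J(t) + dΓ)ᵀ P + P (J(t) + dΓ) ≼ −τ I (i.e. −τI minus the left side is positive semidefinite). Then for every a ≤ d̄, every differentiable solution ξ : [0,∞) → ℝⁿ of ξ̇(t) = (J(t) + a Γ) ξ(t) satisfies ‖ξ(t)‖ ≤ √(p_max/p_min) · e^{−τ t/(2 p_max)} ‖ξ(0)‖ for all t ≥ 0, where p_max and p_min are the largest and smallest diagonal entries of P; in particular ξ(t) → 0 exponentially. -/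
/-!
`V(x) = xᵀ P x` with `P = diagonal p` is a Lyapunov function for every mode `ẋ = (J + aΓ) x`,
`a ≤ d̄`: along a solution `V' = xᵀ (Aᵀ P + P A) x ≤ -τ ‖x‖² ≤ -(τ / p_max) V`, so Grönwall gives
`V(t) ≤ V(0) e^{-τ t / p_max}`. Since `p_min ‖x‖² ≤ V(x) ≤ p_max ‖x‖²`, taking square roots yields
the bound on `‖x(t)‖`.
-/

open Matrix Real Set

section Derivatives

variable {𝕜 ι : Type*} [NontriviallyNormedField 𝕜] [Fintype ι] {f g : 𝕜 → ι → 𝕜}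
  {f' g' : ι → 𝕜} {x : 𝕜}

theorem HasDerivAt.dotProduct (hf : HasDerivAt f f' x) (hg : HasDerivAt g g' x) :
    HasDerivAt (fun y => f y ⬝ᵥ g y) (f' ⬝ᵥ g x + f x ⬝ᵥ g') x := by
  simp only [_root_.dotProduct, ← Finset.sum_add_distrib]
  exact HasDerivAt.fun_sum fun i _ => (hasDerivAt_pi.mp hf i).fun_mul (hasDerivAt_pi.mp hg i)

theorem HasDerivAt.mulVec (A : Matrix ι ι 𝕜) (hf : HasDerivAt f f' x) :
    HasDerivAt (fun y => A *ᵥ f y) (A *ᵥ f') x :=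
  hasDerivAt_pi.mpr fun i =>
    ((hasDerivAt_const x (A i)).dotProduct hf).congr_deriv (by rw [zero_dotProduct, zero_add]; rfl)

theorem HasDerivAt.dotProduct_mulVec_self (P A : Matrix ι ι 𝕜)
    (hf : HasDerivAt f (A *ᵥ f x) x) :
    HasDerivAt (fun y => f y ⬝ᵥ P *ᵥ f y) (f x ⬝ᵥ (Aᵀ * P + P * A) *ᵥ f x) x := by
  convert hf.dotProduct (hf.mulVec P) using 1
  rw [add_mulVec, dotProduct_add, ← mulVec_mulVec, ← mulVec_mulVec, dotProduct_mulVec,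
    vecMul_transpose]

end Derivatives

section QuadraticForms

variable {ι R : Type*} [Fintype ι] [DecidableEq ι]

theorem dotProduct_mulVec_le_neg_mul_dotProduct_self_of_posSemidef [CommRing R] [PartialOrder R]
    [IsOrderedRing R] [StarRing R] [TrivialStar R] {Q : Matrix ι ι R} {τ : R}
    (hQ : (-(τ • (1 : Matrix ι ι R)) - Q).PosSemidef) (x : ι → R) :
    x ⬝ᵥ Q *ᵥ x ≤ -τ * (x ⬝ᵥ x) := by
  have h := hQ.dotProduct_mulVec_nonneg x
  rw [star_trivial, sub_mulVec, dotProduct_sub, neg_mulVec, smul_mulVec, one_mulVec,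
    dotProduct_neg, dotProduct_smul, smul_eq_mul, ← neg_mul] at h
  exact sub_nonneg.mp h

theorem dotProduct_diagonal_mulVec [CommSemiring R] (p x : ι → R) :
    x ⬝ᵥ diagonal p *ᵥ x = ∑ i, p i * (x i * x i) := by
  simp only [_root_.dotProduct, mulVec_diagonal]
  exact Finset.sum_congr rfl fun i _ => mul_left_comm _ _ _

variable [CommRing R] [LinearOrder R] [IsStrictOrderedRing R] {p : ι → R} {c : R}

theorem mul_dotProduct_self_le_dotProduct_diagonal_mulVec (h : ∀ i, c ≤ p i) (x : ι → R) :
    c * (x ⬝ᵥ x) ≤ x ⬝ᵥ diagonal p *ᵥ x := by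
  rw [dotProduct_diagonal_mulVec, _root_.dotProduct, Finset.mul_sum]
  exact Finset.sum_le_sum fun i _ => mul_le_mul_of_nonneg_right (h i) (mul_self_nonneg _)

theorem dotProduct_diagonal_mulVec_le_mul_dotProduct_self (h : ∀ i, p i ≤ c) (x : ι → R) :
    x ⬝ᵥ diagonal p *ᵥ x ≤ c * (x ⬝ᵥ x) := by
  rw [dotProduct_diagonal_mulVec, _root_.dotProduct, Finset.mul_sum]
  exact Finset.sum_le_sum fun i _ => mul_le_mul_of_nonneg_right (h i) (mul_self_nonneg _)

end QuadraticForms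

theorem le_mul_exp_of_hasDerivAt_le_mul {V V' : ℝ → ℝ} {K t : ℝ} (ht : 0 ≤ t)
    (hV : ∀ s ∈ Icc 0 t, HasDerivAt V (V' s) s) (hV' : ∀ s ∈ Ico 0 t, V' s ≤ K * V s) :
    V t ≤ V 0 * exp (K * t) := by
  have h := le_gronwallBound_of_liminf_deriv_right_le (K := K) (ε := 0)
    (fun s hs => (hV s hs).continuousAt.continuousWithinAt)
    (fun s hs r hr => (hV s (Ico_subset_Icc_self hs)).hasDerivWithinAt.liminf_right_slope_le hr)
    le_rfl (fun s hs => (hV' s hs).trans_eq (add_zero _).symm) t ⟨ht, le_rfl⟩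
  rwa [gronwallBound_ε0, sub_zero] at h

theorem sqrt_le_sqrt_div_mul_exp_mul_sqrt {a b m M e : ℝ} (hm : 0 < m) (hb : 0 ≤ b)
    (h : m * a ≤ M * b * exp (2 * e)) : √a ≤ √(M / m) * exp e * √b := by
  have ha : a ≤ M / m * exp (2 * e) * b := by
    rw [div_mul_eq_mul_div, div_mul_eq_mul_div, le_div_iff₀ hm]
    linarith
  calc √a ≤ √(M / m * exp (2 * e) * b) := sqrt_le_sqrt ha
    _ = √(M / m) * exp e * √b := by
      rw [sqrt_mul' _ hb, sqrt_mul' _ (exp_pos _).le, ← exp_half,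
        mul_div_cancel_left₀ e two_ne_zero]

theorem lyapunov_diagonal_exponential_stability_general
    {n : ℕ} (J : ℝ → Matrix (Fin n) (Fin n) ℝ)
    (Γ : Matrix (Fin n) (Fin n) ℝ)
    (p : Fin n → ℝ) (hp : ∀ i, 0 < p i)
    (pmin pmax : ℝ)
    (hpmin : IsLeast (Set.range p) pmin) (hpmax : IsGreatest (Set.range p) pmax)
    (dbar τ : ℝ) (hτ : 0 < τ)
    (hLyap : ∀ d : ℝ, d ≤ dbar → ∀ t : ℝ,
      (-(τ • (1 : Matrix (Fin n) (Fin n) ℝ)) -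
        ((J t + d • Γ)ᵀ * Matrix.diagonal p +
          Matrix.diagonal p * (J t + d • Γ))).PosSemidef) :
    ∀ a : ℝ, a ≤ dbar → ∀ ξ : ℝ → Fin n → ℝ,
      (∀ t : ℝ, 0 ≤ t → HasDerivAt ξ ((J t + a • Γ).mulVec (ξ t)) t) →
      ∀ t : ℝ, 0 ≤ t →
        Real.sqrt (∑ i, ξ t i ^ 2) ≤
          Real.sqrt (pmax / pmin) * Real.exp (-(τ * t) / (2 * pmax)) *
            Real.sqrt (∑ i, ξ 0 i ^ 2) := by
  intro a ha ξ hξ t ht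
  have hpmin_pos : 0 < pmin := by
    obtain ⟨i, rfl⟩ := hpmin.1
    exact hp i
  have hpmax_pos : 0 < pmax := hpmin_pos.trans_le (hpmin.2 hpmax.1)
  have hle_pmax : ∀ i, p i ≤ pmax := fun i => hpmax.2 ⟨i, rfl⟩
  set V : ℝ → ℝ := fun s => ξ s ⬝ᵥ diagonal p *ᵥ ξ s
  have hdecay : V t ≤ V 0 * exp (-(τ / pmax) * t) := by
    refine le_mul_exp_of_hasDerivAt_le_mul ht
      (fun s hs => (hξ s hs.1).dotProduct_mulVec_self _ _) fun s hs => ?_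
    calc _ ≤ -τ * (ξ s ⬝ᵥ ξ s) :=
          dotProduct_mulVec_le_neg_mul_dotProduct_self_of_posSemidef (hLyap a ha s) _
      _ = -(τ / pmax) * (pmax * (ξ s ⬝ᵥ ξ s)) := by field_simp
      _ ≤ -(τ / pmax) * V s := mul_le_mul_of_nonpos_left
          (dotProduct_diagonal_mulVec_le_mul_dotProduct_self hle_pmax _)
          (neg_nonpos.mpr (div_pos hτ hpmax_pos).le)
  have hsq : ∀ x : Fin n → ℝ, ∑ i, x i ^ 2 = x ⬝ᵥ x := fun x => by simp only [sq]; rfl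
  rw [hsq, hsq]
  refine sqrt_le_sqrt_div_mul_exp_mul_sqrt hpmin_pos (dotProduct_self_star_nonneg _) ?_
  calc pmin * (ξ t ⬝ᵥ ξ t) ≤ V t :=
        mul_dotProduct_self_le_dotProduct_diagonal_mulVec (fun i => hpmin.2 ⟨i, rfl⟩) _
    _ ≤ V 0 * exp (-(τ / pmax) * t) := hdecay
    _ ≤ pmax * (ξ 0 ⬝ᵥ ξ 0) * exp (2 * (-(τ * t) / (2 * pmax))) := by
      rw [show 2 * (-(τ * t) / (2 * pmax)) = -(τ / pmax) * t by field_simp]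
      exact mul_le_mul_of_nonneg_right
        (dotProduct_diagonal_mulVec_le_mul_dotProduct_self hle_pmax _) (exp_pos _).le

/-- Let `J : ℝ → ℝ^{n×n}` be continuous, `Γ ∈ ℝ^{n×n}` diagonal, and suppose there exist a
diagonal positive definite matrix `P = diagonal p`, constants `d̄ < 0` and `τ > 0` such
that for every `d ≤ d̄` and every `t`,
`(J(t) + dΓ)ᵀ P + P (J(t) + dΓ) ≼ -τ I` (i.e. `-τI` minus the left-hand side is
positive semidefinite).  Then for every `a ≤ d̄`, every differentiable solution
`ξ : [0,∞) → ℝⁿ` of `ξ̇(t) = (J(t) + a Γ) ξ(t)` satisfies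
`‖ξ(t)‖ ≤ √(p_max / p_min) · e^{-τ t / (2 p_max)} ‖ξ(0)‖` for all `t ≥ 0` (Euclidean
norm), where `p_max` and `p_min` are the largest and smallest diagonal entries of `P`;
in particular `ξ(t) → 0` exponentially. -/
theorem lyapunov_diagonal_exponential_stability
    {n : ℕ} (J : ℝ → Matrix (Fin n) (Fin n) ℝ) (hJ : Continuous J)
    (Γ : Matrix (Fin n) (Fin n) ℝ) (hΓ : Γ.IsDiag)
    (p : Fin n → ℝ) (hp : ∀ i, 0 < p i)
    (pmin pmax : ℝ)
    (hpmin : IsLeast (Set.range p) pmin) (hpmax : IsGreatest (Set.range p) pmax)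
    (dbar τ : ℝ) (hdbar : dbar < 0) (hτ : 0 < τ)
    (hLyap : ∀ d : ℝ, d ≤ dbar → ∀ t : ℝ,
      (-(τ • (1 : Matrix (Fin n) (Fin n) ℝ)) -
        ((J t + d • Γ)ᵀ * Matrix.diagonal p +
          Matrix.diagonal p * (J t + d • Γ))).PosSemidef) :
    ∀ a : ℝ, a ≤ dbar → ∀ ξ : ℝ → Fin n → ℝ,
      (∀ t : ℝ, 0 ≤ t → HasDerivAt ξ ((J t + a • Γ).mulVec (ξ t)) t) →
      ∀ t : ℝ, 0 ≤ t →
        Real.sqrt (∑ i, ξ t i ^ 2) ≤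
          Real.sqrt (pmax / pmin) * Real.exp (-(τ * t) / (2 * pmax)) *
            Real.sqrt (∑ i, ξ 0 i ^ 2) :=
  lyapunov_diagonal_exponential_stability_general J Γ p hp pmin pmax hpmin hpmax dbar τ hτ hLyap
end

section
/- Let f : ℝⁿ → ℝⁿ be Lipschitz continuous with Lipschitz constant L_f > 0, and let x̄ ∈ ℝⁿ satisfy f(x̄) = 0. Let M ∈ ℝ^{m×m} be symmetric with −M positive definite, and let μ > 0 denote the smallest eigenvalue of −M. Let c > L_f/μ, and let x_1, …, x_m : [0,∞) → ℝⁿ be differentiable functions satisfying ẋ_i(t) = f(x_i(t)) + c ∑_{j=1}^m M_{ij} (x_j(t) − x̄) for all i and t ≥ 0. Then, writing e(t) := (x_1(t) − x̄, …, x_m(t) − x̄) ∈ ℝ^{mn}, one has ‖e(t)‖ ≤ e^{(L_f − cμ) t} ‖e(0)‖ for all t ≥ 0; in particular every x_i(t) converges exponentially to the homogeneous stationary state x̄. -/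
/-!
Let `e = (x₁ - x̄, …, x_m - x̄)` and `V = ‖e‖²`, so `V' = 2 ⟨e, ẋ⟩`. Since `f x̄ = 0`,
Cauchy–Schwarz and the Lipschitz bound give `⟨xᵢ - x̄, f xᵢ⟩ ≤ L_f ‖xᵢ - x̄‖²`; the coupling term
is `c ∑ₖ ⟨e⁽ᵏ⁾, M e⁽ᵏ⁾⟩` over the coordinate columns `e⁽ᵏ⁾ ∈ ℝᵐ`, and the Rayleigh bound for the
symmetric matrix `-M` makes it at most `-c μ V`. Hence `V' ≤ 2 (L_f - c μ) V`, Grönwall gives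
`V t ≤ e^{2 (L_f - c μ) t} V 0`, and taking square roots gives the claim.
-/

open Finset Matrix

section

variable {ι κ : Type*} [Fintype ι] [Fintype κ]

theorem Matrix.IsHermitian.mul_dotProduct_self_le_dotProduct_mulVec [DecidableEq ι]
    {N : Matrix ι ι ℝ} (hN : N.IsHermitian) {μ : ℝ}
    (hμ : μ ∈ lowerBounds {ν : ℝ | ∃ v : ι → ℝ, v ≠ 0 ∧ N *ᵥ v = ν • v}) (v : ι → ℝ) :
    μ * (v ⬝ᵥ v) ≤ v ⬝ᵥ N *ᵥ v := by
  -- `N - μ • 1` is positive semidefinite: an eigenvector basis of it is one of `N`.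
  have hA : (N - μ • 1).IsHermitian := hN.sub (isHermitian_one.smul (.all μ))
  have hpsd : (N - μ • 1).PosSemidef := by
    refine hA.posSemidef_iff_eigenvalues_nonneg.mpr fun i => show 0 ≤ hA.eigenvalues i from ?_
    have hw : N *ᵥ ⇑(hA.eigenvectorBasis i) =
        (hA.eigenvalues i + μ) • ⇑(hA.eigenvectorBasis i) := by
      have := hA.mulVec_eigenvectorBasis i
      rw [sub_mulVec, smul_mulVec, one_mulVec, sub_eq_iff_eq_add] at this
      rw [this, add_smul]
    have hw0 : ⇑(hA.eigenvectorBasis i) ≠ 0 := fun h =>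
      hA.eigenvectorBasis.orthonormal.ne_zero i (by ext k; exact congrFun h k)
    linarith [hμ ⟨_, hw0, hw⟩]
  have := hpsd.dotProduct_mulVec_nonneg v
  rw [star_trivial, sub_mulVec, smul_mulVec, one_mulVec, dotProduct_sub, dotProduct_smul,
    smul_eq_mul] at this
  linarith

theorem Matrix.IsSymm.sum_sum_mul_sum_mul_le_neg_mul_sum_sum_sq [DecidableEq ι]
    {M : Matrix ι ι ℝ} (hM : M.IsSymm) {μ : ℝ}
    (hμ : μ ∈ lowerBounds {ν : ℝ | ∃ v : ι → ℝ, v ≠ 0 ∧ (-M) *ᵥ v = ν • v}) (e : ι → κ → ℝ) :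
    ∑ i, ∑ k, e i k * ∑ j, M i j * e j k ≤ -μ * ∑ i, ∑ k, e i k ^ 2 := by
  have hN : (-M).IsHermitian := isHermitian_iff_isSymm.mpr hM.neg
  rw [sum_comm, sum_comm (f := fun i k => e i k ^ 2), mul_sum]
  refine sum_le_sum fun k _ => ?_
  have := hN.mul_dotProduct_self_le_dotProduct_mulVec hμ (fun i => e i k)
  simp only [dotProduct, mulVec, neg_apply, neg_mul, sum_neg_distrib, mul_neg] at this
  simp only [pow_two]
  linarith

theorem sum_sub_mul_le_mul_sum_sub_sq {f : (κ → ℝ) → κ → ℝ} {L : ℝ}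
    (hf : ∀ x y : κ → ℝ, √(∑ k, (f x k - f y k) ^ 2) ≤ L * √(∑ k, (x k - y k) ^ 2))
    {xbar : κ → ℝ} (hxbar : f xbar = 0) (y : κ → ℝ) :
    ∑ k, (y k - xbar k) * f y k ≤ L * ∑ k, (y k - xbar k) ^ 2 := by
  have hfy : √(∑ k, f y k ^ 2) ≤ L * √(∑ k, (y k - xbar k) ^ 2) := by
    simpa [hxbar] using hf y xbar
  calc ∑ k, (y k - xbar k) * f y k
      ≤ √(∑ k, (y k - xbar k) ^ 2) * √(∑ k, f y k ^ 2) := Real.sum_mul_le_sqrt_mul_sqrt _ _ _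
    _ ≤ √(∑ k, (y k - xbar k) ^ 2) * (L * √(∑ k, (y k - xbar k) ^ 2)) := by gcongr
    _ = L * ∑ k, (y k - xbar k) ^ 2 := by
      rw [mul_left_comm, Real.mul_self_sqrt (by positivity)]

theorem le_exp_mul_mul_of_hasDerivAt_le_mul {V V' : ℝ → ℝ} {K : ℝ}
    (hV : ∀ t, 0 ≤ t → HasDerivAt V (V' t) t) (hV' : ∀ t, 0 ≤ t → V' t ≤ K * V t)
    {t : ℝ} (ht : 0 ≤ t) : V t ≤ Real.exp (K * t) * V 0 := by
  have := le_gronwallBound_of_liminf_deriv_right_le (ε := 0)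
    (fun s hs => (hV s hs.1).continuousAt.continuousWithinAt)
    (fun s hs _ hr => (hV s hs.1).hasDerivWithinAt.liminf_right_slope_le hr) le_rfl
    (fun s hs => by simpa using hV' s hs.1) t ⟨ht, le_rfl⟩
  simpa [gronwallBound_ε0, mul_comm] using this

theorem hasDerivAt_sum_sum_sub_sq {x : ι → ℝ → κ → ℝ} {x' : ι → κ → ℝ} {t : ℝ}
    (hx : ∀ i, HasDerivAt (x i) (x' i) t) (xbar : κ → ℝ) :
    HasDerivAt (fun s => ∑ i, ∑ k, (x i s k - xbar k) ^ 2)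
      (2 * ∑ i, ∑ k, (x i t k - xbar k) * x' i k) t := by
  simp only [mul_sum]
  refine HasDerivAt.fun_sum fun i _ => HasDerivAt.fun_sum fun k _ => ?_
  refine (((hasDerivAt_pi.mp (hx i) k).sub_const (xbar k)).fun_pow 2).congr_deriv ?_
  ring

theorem sum_sum_sub_mul_pinned_le [DecidableEq ι] {f : (κ → ℝ) → κ → ℝ} {L : ℝ}
    (hf : ∀ x y : κ → ℝ, √(∑ k, (f x k - f y k) ^ 2) ≤ L * √(∑ k, (x k - y k) ^ 2))
    {xbar : κ → ℝ} (hxbar : f xbar = 0) {M : Matrix ι ι ℝ} (hM : M.IsSymm) {μ : ℝ}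
    (hμ : μ ∈ lowerBounds {ν : ℝ | ∃ v : ι → ℝ, v ≠ 0 ∧ (-M) *ᵥ v = ν • v}) {c : ℝ}
    (hc : 0 ≤ c) (X : ι → κ → ℝ) :
    ∑ i, ∑ k, (X i k - xbar k) * (f (X i) + c • ∑ j, M i j • (X j - xbar)) k ≤
      (L - c * μ) * ∑ i, ∑ k, (X i k - xbar k) ^ 2 := by
  have hlip :
      ∑ i, ∑ k, (X i k - xbar k) * f (X i) k ≤ L * ∑ i, ∑ k, (X i k - xbar k) ^ 2 := by
    rw [mul_sum]
    exact sum_le_sum fun i _ => sum_sub_mul_le_mul_sum_sub_sq hf hxbar (X i)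
  have hcoup := mul_le_mul_of_nonneg_left
    (hM.sum_sum_mul_sum_mul_le_neg_mul_sum_sum_sq hμ (fun i k => X i k - xbar k)) hc
  have hsplit : ∑ i, ∑ k, (X i k - xbar k) * (f (X i) + c • ∑ j, M i j • (X j - xbar)) k =
      ∑ i, ∑ k, (X i k - xbar k) * f (X i) k +
        c * ∑ i, ∑ k, (X i k - xbar k) * ∑ j, M i j * (X j k - xbar k) := by
    simp only [Pi.add_apply, Pi.smul_apply, Finset.sum_apply, smul_eq_mul, Pi.sub_apply, mul_add,
      sum_add_distrib, mul_sum, mul_left_comm c]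
  rw [hsplit]
  linear_combination hlip + hcoup

end

theorem pinning_control_exponential_stabilization_general
    {n m : ℕ} (f : (Fin n → ℝ) → Fin n → ℝ) (Lf : ℝ) (hLf : 0 < Lf)
    (hf : ∀ x y : Fin n → ℝ,
      Real.sqrt (∑ k, (f x k - f y k) ^ 2) ≤ Lf * Real.sqrt (∑ k, (x k - y k) ^ 2))
    (xbar : Fin n → ℝ) (hxbar : f xbar = 0)
    (M : Matrix (Fin m) (Fin m) ℝ) (hM : M.IsSymm)
    (μ : ℝ) (hμpos : 0 < μ)
    (hμ : IsLeast {ν : ℝ | ∃ v : Fin m → ℝ, v ≠ 0 ∧ (-M).mulVec v = ν • v} μ)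
    (c : ℝ) (hc : Lf / μ < c)
    (x : Fin m → ℝ → Fin n → ℝ)
    (hode : ∀ (i : Fin m) (t : ℝ), 0 ≤ t →
      HasDerivAt (x i) (f (x i t) + c • ∑ j, M i j • (x j t - xbar)) t) :
    ∀ t : ℝ, 0 ≤ t →
      Real.sqrt (∑ i, ∑ k, (x i t k - xbar k) ^ 2) ≤
        Real.exp ((Lf - c * μ) * t) * Real.sqrt (∑ i, ∑ k, (x i 0 k - xbar k) ^ 2) := by
  have hc₀ : 0 ≤ c := ((div_pos hLf hμpos).trans hc).le
  intro t ht
  have hV := le_exp_mul_mul_of_hasDerivAt_le_mul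
    (fun s hs => hasDerivAt_sum_sum_sub_sq (fun i => hode i s hs) xbar)
    (fun s _ => by
      rw [mul_assoc]
      exact mul_le_mul_of_nonneg_left
        (sum_sum_sub_mul_pinned_le hf hxbar hM hμ.2 hc₀ fun i => x i s) zero_le_two) ht
  calc √(∑ i, ∑ k, (x i t k - xbar k) ^ 2)
      ≤ √(Real.exp (2 * (Lf - c * μ) * t) * ∑ i, ∑ k, (x i 0 k - xbar k) ^ 2) :=
        Real.sqrt_le_sqrt hV
    _ = Real.exp ((Lf - c * μ) * t) * √(∑ i, ∑ k, (x i 0 k - xbar k) ^ 2) := by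
      rw [Real.sqrt_mul (Real.exp_nonneg _), ← Real.exp_half]
      congr 2
      ring

/-- Let `f : ℝⁿ → ℝⁿ` be Lipschitz continuous (w.r.t. the Euclidean norm) with Lipschitz
constant `L_f > 0`, and let `x̄ ∈ ℝⁿ` satisfy `f(x̄) = 0`.  Let `M ∈ ℝ^{m×m}` be
symmetric with `-M` positive definite, and let `μ > 0` denote the smallest eigenvalue
of `-M`.  Let `c > L_f/μ`, and let `x 1, …, x m : [0,∞) → ℝⁿ` be differentiable
functions satisfying `ẋᵢ(t) = f(xᵢ(t)) + c ∑ⱼ Mᵢⱼ (xⱼ(t) - x̄)` for all `i` and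
`t ≥ 0`.  Then, writing `e(t) := (x₁(t) - x̄, …, x_m(t) - x̄) ∈ ℝ^{mn}`, one has
`‖e(t)‖ ≤ e^{(L_f - cμ) t} ‖e(0)‖` for all `t ≥ 0` (Euclidean norms); in particular
every `xᵢ(t)` converges exponentially to the homogeneous stationary state `x̄`. -/
theorem pinning_control_exponential_stabilization
    {n m : ℕ} (f : (Fin n → ℝ) → Fin n → ℝ) (Lf : ℝ) (hLf : 0 < Lf)
    (hf : ∀ x y : Fin n → ℝ,
      Real.sqrt (∑ k, (f x k - f y k) ^ 2) ≤ Lf * Real.sqrt (∑ k, (x k - y k) ^ 2))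
    (xbar : Fin n → ℝ) (hxbar : f xbar = 0)
    (M : Matrix (Fin m) (Fin m) ℝ) (hM : M.IsSymm) (hMneg : (-M).PosDef)
    (μ : ℝ) (hμpos : 0 < μ)
    (hμ : IsLeast {ν : ℝ | ∃ v : Fin m → ℝ, v ≠ 0 ∧ (-M).mulVec v = ν • v} μ)
    (c : ℝ) (hc : Lf / μ < c)
    (x : Fin m → ℝ → Fin n → ℝ)
    (hode : ∀ (i : Fin m) (t : ℝ), 0 ≤ t →
      HasDerivAt (x i) (f (x i t) + c • ∑ j, M i j • (x j t - xbar)) t) :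
    ∀ t : ℝ, 0 ≤ t →
      Real.sqrt (∑ i, ∑ k, (x i t k - xbar k) ^ 2) ≤
        Real.exp ((Lf - c * μ) * t) * Real.sqrt (∑ i, ∑ k, (x i 0 k - xbar k) ^ 2) :=
  pinning_control_exponential_stabilization_general f Lf hLf hf xbar hxbar M hM μ hμpos hμ c hc x
    hode
end
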